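/- Let A ∈ ℝ^{m×n}, M ∈ ℝ^{m×q}, y ∈ ℝ^m and τ > 0, and suppose the feasible set {x : φ(Mᵀ(Ax − y)) ≤ τ} is nonempty. Let ϱ* be the optimal value of the Dantzig selector problem min{‖x‖₁ : φ(Mᵀ(Ax − y)) ≤ τ}, and let S* = {x ∈ ℝⁿ : ‖x‖₁ ≤ ϱ*, φ(Mᵀ(Ax − y)) ≤ τ} be its solution set. Let (ε_j)_{j≥1} be a strictly decreasing sequence of positive numbers with ε_j → 0, and let (Q_j)_{j≥1} be closed convex subsets of ℝ^q with Q_{j+1} ⊆ Q_j and 𝔅^φ ⊆ Q_j ⊆ (1+ε_j)·𝔅^φ for every j. Define S_j = {x ∈ ℝⁿ : ‖x‖₁ ≤ ϱ*, Mᵀ(Ax − y)/τ ∈ Q_j}. Then d^H(S*, S_j) → 0 as j → ∞. -/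

import Mathlib

open Matrix Filter Topology Pointwise

/-- The ℓ₁ norm on `Fin n → ℝ`. -/
noncomputable def l1norm {n : ℕ} (x : Fin n → ℝ) : ℝ := ∑ i, |x i|

/-- The Euclidean (ℓ₂) norm on `Fin n → ℝ`. -/
noncomputable def l2norm {n : ℕ} (x : Fin n → ℝ) : ℝ := Real.sqrt (∑ i, (x i) ^ 2)

/-- The Hausdorff distance (w.r.t. the Euclidean norm) between subsets of `Fin n → ℝ`. -/
noncomputable def hausdorffD {n : ℕ} (S T : Set (Fin n → ℝ)) : ℝ :=
  max (sSup {d : ℝ | ∃ u ∈ S, d = sInf {e : ℝ | ∃ z ∈ T, e = l2norm (u - z)}})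
      (sSup {d : ℝ | ∃ z ∈ T, d = sInf {e : ℝ | ∃ u ∈ S, e = l2norm (u - z)}})

/-- `φ` is a norm on `Fin q → ℝ`. -/
structure IsNorm {q : ℕ} (φ : (Fin q → ℝ) → ℝ) : Prop where
  nonneg : ∀ x, 0 ≤ φ x
  eq_zero_iff : ∀ x, φ x = 0 ↔ x = 0
  smul_eq : ∀ (c : ℝ) (x), φ (c • x) = |c| * φ x
  triangle : ∀ x y, φ (x + y) ≤ φ x + φ y

/-- The dual norm `φ*(u) = sup {uᵀx : φ(x) ≤ 1}`. -/
noncomputable def dualNorm {q : ℕ} (φ : (Fin q → ℝ) → ℝ) (u : Fin q → ℝ) : ℝ :=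
  sSup {t : ℝ | ∃ x : Fin q → ℝ, φ x ≤ 1 ∧ t = ∑ i, u i * x i}

/-- The `i`-th standard basis vector of `ℝ^q`. -/
def stdBasis {q : ℕ} (i : Fin q) : Fin q → ℝ := fun j => if j = i then 1 else 0

/-!
The unit ball lies in every `Q_j`, so `S* ⊆ S_j` and only the distance from points of `S_j`
to `S*` has to be controlled. The sets `S_j` form a decreasing sequence of compact sets, and
their intersection lies in `S*`: a vector lying in `(1 + ε_j) • 𝔅^φ` for every `j` has
`φ`-norm at most `1` because `ε_j → 0`. A decreasing sequence of compact sets eventually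
enters every open neighbourhood of its intersection, in particular every `δ`-neighbourhood
of `S*`.
-/

namespace IsNorm

variable {q : ℕ} {φ : (Fin q → ℝ) → ℝ}

lemma convexOn (hφ : IsNorm φ) : ConvexOn ℝ Set.univ φ := by
  refine ⟨convex_univ, fun x _ y _ a b ha hb _ => ?_⟩
  calc φ (a • x + b • y) ≤ φ (a • x) + φ (b • y) := hφ.triangle _ _
    _ = a • φ x + b • φ y := by
      rw [hφ.smul_eq, hφ.smul_eq, abs_of_nonneg ha, abs_of_nonneg hb, smul_eq_mul, smul_eq_mul]

lemma continuous (hφ : IsNorm φ) : Continuous φ :=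
  hφ.convexOn.locallyLipschitz.continuous

lemma inv_smul_le_one_iff (hφ : IsNorm φ) {τ : ℝ} (hτ : 0 < τ) (u : Fin q → ℝ) :
    φ (τ⁻¹ • u) ≤ 1 ↔ φ u ≤ τ := by
  rw [hφ.smul_eq, abs_of_pos (inv_pos.2 hτ), inv_mul_le_iff₀ hτ, mul_one]

lemma le_abs_of_mem_smul_ball (hφ : IsNorm φ) {c : ℝ} {u : Fin q → ℝ}
    (hu : u ∈ c • {v : Fin q → ℝ | φ v ≤ 1}) : φ u ≤ |c| := by
  obtain ⟨v, hv, rfl⟩ := hu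
  rw [hφ.smul_eq]
  exact mul_le_of_le_one_right (abs_nonneg c) hv

lemma le_one_of_forall_mem_smul_ball (hφ : IsNorm φ) {c : ℕ → ℝ}
    (hc : Tendsto c atTop (𝓝 1)) {u : Fin q → ℝ}
    (hu : ∀ j, u ∈ c j • {v : Fin q → ℝ | φ v ≤ 1}) : φ u ≤ 1 := by
  have hc_abs : Tendsto (fun j => |c j|) atTop (𝓝 1) := by simpa using hc.abs
  exact ge_of_tendsto' hc_abs fun j => hφ.le_abs_of_mem_smul_ball (hu j)

end IsNorm

section Norms

variable {n : ℕ}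

lemma continuous_l1norm : Continuous (l1norm (n := n)) := by
  unfold l1norm; fun_prop

lemma l1norm_nonneg (x : Fin n → ℝ) : 0 ≤ l1norm x :=
  Finset.sum_nonneg fun i _ => abs_nonneg (x i)

lemma norm_le_l1norm (x : Fin n → ℝ) : ‖x‖ ≤ l1norm x := by
  refine (pi_norm_le_iff_of_nonneg (l1norm_nonneg x)).2 fun i => ?_
  rw [Real.norm_eq_abs]
  exact Finset.single_le_sum (f := fun i => |x i|) (fun j _ => abs_nonneg (x j))
    (Finset.mem_univ i)

lemma isCompact_setOf_l1norm_le (r : ℝ) : IsCompact {x : Fin n → ℝ | l1norm x ≤ r} :=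
  Metric.isCompact_of_isClosed_isBounded (isClosed_le continuous_l1norm continuous_const)
    ((Metric.isBounded_closedBall (x := 0) (r := r)).subset fun x hx =>
      mem_closedBall_zero_iff.2 ((norm_le_l1norm x).trans hx))

lemma continuous_l2norm : Continuous (l2norm (n := n)) := by
  unfold l2norm; fun_prop

lemma l2norm_nonneg (x : Fin n → ℝ) : 0 ≤ l2norm x := Real.sqrt_nonneg _

@[simp]
lemma l2norm_zero : l2norm (0 : Fin n → ℝ) = 0 := by simp [l2norm]

end Norms

section Hausdorff

variable {n : ℕ}

lemma sInf_setOf_exists_eq_le {α : Type*} {f : α → ℝ} (hf : ∀ x, 0 ≤ f x) {S : Set α}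
    {a : α} (ha : a ∈ S) : sInf {e : ℝ | ∃ x ∈ S, e = f x} ≤ f a :=
  csInf_le ⟨0, by rintro _ ⟨x, -, rfl⟩; exact hf x⟩ ⟨a, ha, rfl⟩

lemma hausdorffD_nonneg (S T : Set (Fin n → ℝ)) : 0 ≤ hausdorffD S T :=
  le_max_of_le_left <| Real.sSup_nonneg <| by
    rintro _ ⟨u, -, rfl⟩
    exact Real.sInf_nonneg <| by rintro _ ⟨z, -, rfl⟩; exact l2norm_nonneg _

lemma hausdorffD_le_of_subset {S T : Set (Fin n → ℝ)} {δ : ℝ} (hST : S ⊆ T) (hδ : 0 ≤ δ)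
    (hT : ∀ z ∈ T, ∃ u ∈ S, l2norm (u - z) ≤ δ) : hausdorffD S T ≤ δ := by
  refine max_le (Real.sSup_le ?_ hδ) (Real.sSup_le ?_ hδ)
  · rintro _ ⟨u, hu, rfl⟩
    calc _ ≤ l2norm (u - u) :=
          sInf_setOf_exists_eq_le (f := fun z => l2norm (u - z)) (fun _ => l2norm_nonneg _)
            (hST hu)
      _ ≤ δ := by simpa using hδ
  · rintro _ ⟨z, hz, rfl⟩
    obtain ⟨u, hu, huz⟩ := hT z hz
    exact (sInf_setOf_exists_eq_le (f := fun u => l2norm (u - z))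
      (fun _ => l2norm_nonneg _) hu).trans huz

lemma eventually_subset_of_iInter_subset {X : Type*} [TopologicalSpace X] [T2Space X]
    {T : ℕ → Set X} (hT : Antitone T) (hT_cpct : ∀ j, IsCompact (T j)) {U : Set X}
    (hU : IsOpen U) (hTU : ⋂ j, T j ⊆ U) : ∀ᶠ j in atTop, T j ⊆ U := by
  obtain ⟨i, hi⟩ := exists_subset_nhds_of_isCompact hT.directed_ge hT_cpct
    fun x hx => hU.mem_nhds (hTU hx)
  exact eventually_atTop.2 ⟨i, fun j hj => (hT hj).trans hi⟩

theorem tendsto_hausdorffD_of_antitone {S : Set (Fin n → ℝ)} {T : ℕ → Set (Fin n → ℝ)}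
    (hT : Antitone T) (hT_cpct : ∀ j, IsCompact (T j)) (hST : ∀ j, S ⊆ T j)
    (hTS : ⋂ j, T j ⊆ S) : Tendsto (fun j => hausdorffD S (T j)) atTop (𝓝 0) := by
  refine tendsto_order.2 ⟨fun a ha => Eventually.of_forall fun j =>
    ha.trans_le (hausdorffD_nonneg _ _), fun δ hδ => ?_⟩
  set U := ⋃ u ∈ S, {z : Fin n → ℝ | l2norm (u - z) < δ / 2}
  have hU : IsOpen U := isOpen_biUnion fun u _ =>
    isOpen_lt (continuous_l2norm.comp (continuous_const.sub continuous_id)) continuous_const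
  have hSU : S ⊆ U := fun u hu => Set.mem_biUnion hu (by simpa using half_pos hδ)
  filter_upwards [eventually_subset_of_iInter_subset hT hT_cpct hU (hTS.trans hSU)]
    with j hj
  refine (hausdorffD_le_of_subset (hST j) (half_pos hδ).le fun z hz => ?_).trans_lt
    (half_lt_self hδ)
  obtain ⟨u, hu, huz⟩ := Set.mem_iUnion₂.1 (hj hz)
  exact ⟨u, hu, le_of_lt huz⟩

end Hausdorff

theorem DS_relaxation_hausdorff_convergence_general (m n q : ℕ)
    (A : Matrix (Fin m) (Fin n) ℝ) (M : Matrix (Fin m) (Fin q) ℝ)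
    (y : Fin m → ℝ) (τ : ℝ) (hτ : 0 < τ)
    (φ : (Fin q → ℝ) → ℝ) (hφ : IsNorm φ)
    (ϱ : ℝ)
    (ε : ℕ → ℝ)
    (hεlim : Tendsto ε atTop (𝓝 0))
    (Q : ℕ → Set (Fin q → ℝ))
    (hQclosed : ∀ j, IsClosed (Q j))
    (hQnested : ∀ j, Q (j + 1) ⊆ Q j)
    (hBQ : ∀ j, {u : Fin q → ℝ | φ u ≤ 1} ⊆ Q j)
    (hQB : ∀ j, Q j ⊆ (1 + ε j) • {u : Fin q → ℝ | φ u ≤ 1}) :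
    Tendsto (fun j =>
        hausdorffD
          {x : Fin n → ℝ | l1norm x ≤ ϱ ∧ φ (Mᵀ.mulVec (A.mulVec x - y)) ≤ τ}
          {x : Fin n → ℝ | l1norm x ≤ ϱ ∧ τ⁻¹ • Mᵀ.mulVec (A.mulVec x - y) ∈ Q j})
      atTop (𝓝 0) := by
  have hres : Continuous fun x : Fin n → ℝ => Mᵀ.mulVec (A.mulVec x - y) :=
    continuous_const.matrix_mulVec
      ((continuous_const.matrix_mulVec continuous_id).sub continuous_const)
  have hε : Tendsto (fun j => 1 + ε j) atTop (𝓝 1) := by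
    simpa using tendsto_const_nhds.add hεlim
  refine tendsto_hausdorffD_of_antitone ?_ (fun j => ?_) (fun j x hx => ?_) (fun x hx => ?_)
  · exact fun i j hij x hx => ⟨hx.1, antitone_nat_of_succ_le hQnested hij hx.2⟩
  · exact (isCompact_setOf_l1norm_le ϱ).of_isClosed_subset
      ((isClosed_le continuous_l1norm continuous_const).inter
        ((hQclosed j).preimage (hres.const_smul τ⁻¹))) fun x hx => hx.1
  · exact ⟨hx.1, hBQ j ((hφ.inv_smul_le_one_iff hτ _).2 hx.2)⟩
  · have hxj := Set.mem_iInter.1 hx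
    exact ⟨(hxj 0).1, (hφ.inv_smul_le_one_iff hτ _).1
      (hφ.le_one_of_forall_mem_smul_ball hε fun j => hQB j (hxj j).2)⟩

/-- Lemma 4.3: the relaxed solution sets `S_j` converge to the solution set `S*`
of the nonlinear Dantzig selector in Hausdorff distance. -/
theorem DS_relaxation_hausdorff_convergence (m n q : ℕ)
    (A : Matrix (Fin m) (Fin n) ℝ) (M : Matrix (Fin m) (Fin q) ℝ)
    (y : Fin m → ℝ) (τ : ℝ) (hτ : 0 < τ)
    (φ : (Fin q → ℝ) → ℝ) (hφ : IsNorm φ)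
    (hbasis : ∀ i : Fin q, φ (stdBasis i) = 1)
    (hdbasis : ∀ i : Fin q, dualNorm φ (stdBasis i) = 1)
    (hfeas : ∃ x : Fin n → ℝ, φ (Mᵀ.mulVec (A.mulVec x - y)) ≤ τ)
    (ϱ : ℝ)
    (hϱ : ϱ = sInf {t : ℝ | ∃ x : Fin n → ℝ,
      φ (Mᵀ.mulVec (A.mulVec x - y)) ≤ τ ∧ t = l1norm x})
    (ε : ℕ → ℝ) (hεpos : ∀ j, 0 < ε j) (hεanti : StrictAnti ε)
    (hεlim : Tendsto ε atTop (𝓝 0))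
    (Q : ℕ → Set (Fin q → ℝ))
    (hQclosed : ∀ j, IsClosed (Q j)) (hQconv : ∀ j, Convex ℝ (Q j))
    (hQnested : ∀ j, Q (j + 1) ⊆ Q j)
    (hBQ : ∀ j, {u : Fin q → ℝ | φ u ≤ 1} ⊆ Q j)
    (hQB : ∀ j, Q j ⊆ (1 + ε j) • {u : Fin q → ℝ | φ u ≤ 1}) :
    Tendsto (fun j =>
        hausdorffD
          {x : Fin n → ℝ | l1norm x ≤ ϱ ∧ φ (Mᵀ.mulVec (A.mulVec x - y)) ≤ τ}
          {x : Fin n → ℝ | l1norm x ≤ ϱ ∧ τ⁻¹ • Mᵀ.mulVec (A.mulVec x - y) ∈ Q j})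
      atTop (𝓝 0) :=
  DS_relaxation_hausdorff_convergence_general m n q A M y τ hτ φ hφ ϱ ε hεlim Q hQclosed hQnested
    hBQ hQB
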